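/- Let α ∈ (0,1) ∪ (1,2), let ρ and σ be quantum states on ℂ^d with supp(ρ) = supp(σ), and let m ≥ 1, t₁,…,t_m ∈ [0,1], w₁,…,w_m > 0 be such that h_m(x) := 1 + (sin(απ)/π)·Σ_{j=1}^m w_j f_{t_j}(x) satisfies: h_m(x) ≥ x^{1−α} for all x > 0 if α ∈ (0,1), and h_m(x) ≤ x^{1−α} for all x > 0 if α ∈ (1,2). Suppose real numbers D̂₁,…,D̂_m satisfy D̂_j ≥ D_{f_{t_j}}(ρ‖σ) for every j, and set Q̂ := 1 + (sin(απ)/π)·Σ_{j=1}^m w_j·D̂_j. If Q̂ > 0, then (1/(α−1))·log₂ Q̂ ≤ D_α(ρ‖σ); that is, the estimate is a rigorous lower bound on the Petz Rényi divergence. -/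

import Mathlib

noncomputable section

namespace QRE

open scoped ComplexOrder

open Matrix

variable {d : ℕ}

/-- The rank-one projector `|u⟩⟨u|` associated with a vector `u ∈ ℂ^d`. -/
def rankOne (u : EuclideanSpace ℂ (Fin d)) : Matrix (Fin d) (Fin d) ℂ :=
  Matrix.of fun i j => u i * (starRingEnd ℂ) (u j)

/-- Functional calculus on the support of a Hermitian matrix: apply `g` to the
positive eigenvalues, and `0` to the rest. -/
def matFun (g : ℝ → ℝ) {A : Matrix (Fin d) (Fin d) ℂ} (hA : A.IsHermitian) :
    Matrix (Fin d) (Fin d) ℂ :=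
  ∑ j, (if 0 < hA.eigenvalues j then (g (hA.eigenvalues j) : ℂ) else 0) •
    rankOne (hA.eigenvectorBasis j)

/-- The orthogonal projection onto the support (column space) of a Hermitian matrix. -/
def suppProj {A : Matrix (Fin d) (Fin d) ℂ} (hA : A.IsHermitian) :
    Matrix (Fin d) (Fin d) ℂ :=
  matFun (fun _ => 1) hA

/-- The standard quantum `f`-divergence (for `supp ρ ⊆ supp σ`, where the `f(0⁺)` term
vanishes): `D_f(ρ‖σ) = Σ_{j : η_j > 0} Σ_{k : μ_k > 0} η_j f(μ_k/η_j) tr[P_j Q_k]`. -/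
def Df (f : ℝ → ℝ) {ρ σ : Matrix (Fin d) (Fin d) ℂ}
    (hρ : ρ.IsHermitian) (hσ : σ.IsHermitian) : ℝ :=
  ∑ j, ∑ k,
    if 0 < hρ.eigenvalues j ∧ 0 < hσ.eigenvalues k then
      hρ.eigenvalues j * f (hσ.eigenvalues k / hρ.eigenvalues j) *
        (Matrix.trace (rankOne (hρ.eigenvectorBasis j) *
          rankOne (hσ.eigenvectorBasis k))).re
    else 0

/-- `f_t(x) = (x-1)/(t(x-1)+1)`. -/
def ft (t x : ℝ) : ℝ := (x - 1) / (t * (x - 1) + 1)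

/-- A quantum state: positive semidefinite with unit trace. -/
def IsState (ρ : Matrix (Fin d) (Fin d) ℂ) : Prop := ρ.PosSemidef ∧ ρ.trace = 1

/-- The Umegaki relative entropy `tr[ρ (log₂ ρ − log₂ σ)]` (logs on the supports). -/
def relEnt {ρ σ : Matrix (Fin d) (Fin d) ℂ} (hρ : ρ.IsHermitian) (hσ : σ.IsHermitian) : ℝ :=
  (Matrix.trace (ρ * (matFun (Real.logb 2) hρ - matFun (Real.logb 2) hσ))).re

/-- `Q_α(ρ‖σ) = tr[ρ^α σ^{1-α}]`, matrix powers by functional calculus on the support. -/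
def Qalpha (α : ℝ) {ρ σ : Matrix (Fin d) (Fin d) ℂ}
    (hρ : ρ.IsHermitian) (hσ : σ.IsHermitian) : ℝ :=
  (Matrix.trace (matFun (fun y => y ^ α) hρ * matFun (fun y => y ^ (1 - α)) hσ)).re

/-- `Q₀(ρ‖σ) = tr[ρ⁰ σ]`. -/
def Qzero {ρ : Matrix (Fin d) (Fin d) ℂ} (hρ : ρ.IsHermitian)
    (σ : Matrix (Fin d) (Fin d) ℂ) : ℝ :=
  (Matrix.trace (suppProj hρ * σ)).re

/-- `Q₂(ρ‖σ) = tr[ρ² σ⁺]`, with `σ⁺` the Moore–Penrose pseudo-inverse of `σ`. -/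
def Qtwo (ρ : Matrix (Fin d) (Fin d) ℂ) {σ : Matrix (Fin d) (Fin d) ℂ}
    (hσ : σ.IsHermitian) : ℝ :=
  (Matrix.trace (ρ * ρ * matFun (fun y => y⁻¹) hσ)).re

/-!
Everything is read off the pairing `g ↦ D_g(ρ‖σ) = Σ_{j,k} η_j g(μ_k/η_j) |⟨u_j, v_k⟩|²`
over pairs of positive eigenvalues, i.e. the classical `g`-divergence of the Nussbaum–Szkoła
distributions. It is linear in `g`, monotone in the values of `g` on `(0, ∞)`, takes the value
`tr ρ = 1` at `g ≡ 1` once `supp ρ ⊆ supp σ`, and gives `Q_α` at `g(x) = x^{1-α}`. Pairing the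
one-sided bound between `h_m` and `x^{1-α}` therefore yields `Q_α ≤ Q̂` for `α < 1` and
`Q̂ ≤ Q_α` for `α > 1`, the overestimates `D̂_j` entering with the sign of `sin(απ)`, which is
that of `1 - α`. The factor `1/(α-1)` then turns both into the same inequality of logarithms.
-/

variable {ρ σ : Matrix (Fin d) (Fin d) ℂ}

lemma trace_rankOne_mul_rankOne (u v : EuclideanSpace ℂ (Fin d)) :
    (rankOne u * rankOne v).trace = ((‖(inner ℂ u v : ℂ)‖ ^ 2 : ℝ) : ℂ) := by
  have hinner : star ⇑u ⬝ᵥ ⇑v = inner ℂ u v := dotProduct_comm _ _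
  have hconj : ⇑u ⬝ᵥ star ⇑v = star (inner ℂ u v) := by
    rw [← hinner, star_dotProduct, star_star, dotProduct_comm]
  change (vecMulVec (⇑u) (star ⇑u) * vecMulVec (⇑v) (star ⇑v)).trace = _
  rw [vecMulVec_mul_vecMulVec, trace_vecMulVec, dotProduct_smul, smul_eq_mul, hinner, hconj,
    Complex.star_def, Complex.mul_conj', Complex.ofReal_pow]

lemma inner_eigenvectorBasis_eq_zero_of_range_le (hρ : ρ.IsHermitian) (hσ : σ.IsHermitian)
    (hsupp : LinearMap.range ρ.mulVecLin ≤ LinearMap.range σ.mulVecLin) {j k : Fin d}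
    (hj : hρ.eigenvalues j ≠ 0) (hk : hσ.eigenvalues k = 0) :
    inner ℂ (hρ.eigenvectorBasis j) (hσ.eigenvectorBasis k) = 0 := by
  obtain ⟨x, hx⟩ : ⇑(hρ.eigenvectorBasis j) ∈ LinearMap.range σ.mulVecLin := by
    refine hsupp ⟨(hρ.eigenvalues j : ℂ)⁻¹ • ⇑(hρ.eigenvectorBasis j), ?_⟩
    rw [mulVecLin_apply, mulVec_smul, hρ.mulVec_eigenvectorBasis, ← Complex.coe_smul, smul_smul,
      inv_mul_cancel₀ (Complex.ofReal_ne_zero.mpr hj), one_smul]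
  have hker : σ *ᵥ ⇑(hσ.eigenvectorBasis k) = 0 := by
    rw [hσ.mulVec_eigenvectorBasis, hk, zero_smul]
  rw [EuclideanSpace.inner_eq_star_dotProduct, ← hx, mulVecLin_apply, star_mulVec, hσ.eq,
    dotProduct_comm, ← dotProduct_mulVec, hker, dotProduct_zero]

lemma sum_norm_inner_eigenvectorBasis_sq (hρ : ρ.IsHermitian) (hσ : σ.IsHermitian) (j : Fin d) :
    ∑ k, ‖(inner ℂ (hρ.eigenvectorBasis j) (hσ.eigenvectorBasis k) : ℂ)‖ ^ 2 = 1 := by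
  rw [hσ.eigenvectorBasis.sum_sq_norm_inner_left, hρ.eigenvectorBasis.orthonormal.1 j, one_pow]

lemma Df_eq_sum (f : ℝ → ℝ) (hρ : ρ.IsHermitian) (hσ : σ.IsHermitian) :
    Df f hρ hσ = ∑ j, ∑ k, if 0 < hρ.eigenvalues j ∧ 0 < hσ.eigenvalues k then
      hρ.eigenvalues j * f (hσ.eigenvalues k / hρ.eigenvalues j) *
        ‖(inner ℂ (hρ.eigenvectorBasis j) (hσ.eigenvectorBasis k) : ℂ)‖ ^ 2 else 0 := by
  simp only [Df, trace_rankOne_mul_rankOne, Complex.ofReal_re]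

@[simps]
def DfLinearMap (hρ : ρ.IsHermitian) (hσ : σ.IsHermitian) : (ℝ → ℝ) →ₗ[ℝ] ℝ where
  toFun f := Df f hρ hσ
  map_add' f g := by
    simp only [Df, ← Finset.sum_add_distrib]
    refine Finset.sum_congr rfl fun j _ => Finset.sum_congr rfl fun k _ => ?_
    split_ifs
    · simp only [Pi.add_apply]; ring
    · simp
  map_smul' c f := by
    simp only [Df, Finset.mul_sum, RingHom.id_apply, smul_eq_mul]
    refine Finset.sum_congr rfl fun j _ => Finset.sum_congr rfl fun k _ => ?_
    split_ifs
    · simp only [Pi.smul_apply, smul_eq_mul]; ring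
    · simp

lemma Df_one_add_mul_sum {ι : Type*} (s : Finset ι) (c : ℝ) (w : ι → ℝ) (f : ι → ℝ → ℝ)
    (hρ : ρ.IsHermitian) (hσ : σ.IsHermitian) :
    Df (fun x => 1 + c * ∑ i ∈ s, w i * f i x) hρ hσ =
      Df (fun _ => 1) hρ hσ + c * ∑ i ∈ s, w i * Df (f i) hρ hσ := by
  have hfun : (fun x => 1 + c * ∑ i ∈ s, w i * f i x) = (fun _ => 1) + c • ∑ i ∈ s, w i • f i := by
    ext x; simp
  have := map_add (DfLinearMap hρ hσ) (fun _ => 1) (c • ∑ i ∈ s, w i • f i)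
  simpa [← hfun, map_smul, map_sum] using this

lemma Df_mono (hρ : ρ.IsHermitian) (hσ : σ.IsHermitian) {f g : ℝ → ℝ}
    (hfg : ∀ x > 0, f x ≤ g x) : Df f hρ hσ ≤ Df g hρ hσ := by
  rw [Df_eq_sum, Df_eq_sum]
  refine Finset.sum_le_sum fun j _ => Finset.sum_le_sum fun k _ => ?_
  split_ifs with h
  · gcongr
    · exact h.1.le
    · exact hfg _ (div_pos h.2 h.1)
  · rfl

lemma Df_one (hρ : ρ.PosSemidef) (hσ : σ.PosSemidef)
    (hsupp : LinearMap.range ρ.mulVecLin ≤ LinearMap.range σ.mulVecLin) :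
    Df (fun _ => 1) hρ.1 hσ.1 = ρ.trace.re := by
  rw [Df_eq_sum, hρ.1.trace_eq_sum_eigenvalues, Complex.re_sum]
  refine Finset.sum_congr rfl fun j _ => ?_
  rcases (hρ.eigenvalues_nonneg j).lt_or_eq with hj | hj
  · have hterm : ∀ k, (if 0 < hρ.1.eigenvalues j ∧ 0 < hσ.1.eigenvalues k then
        hρ.1.eigenvalues j * 1 *
          ‖(inner ℂ (hρ.1.eigenvectorBasis j) (hσ.1.eigenvectorBasis k) : ℂ)‖ ^ 2 else 0) =
        hρ.1.eigenvalues j *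
          ‖(inner ℂ (hρ.1.eigenvectorBasis j) (hσ.1.eigenvectorBasis k) : ℂ)‖ ^ 2 := by
      intro k
      rcases (hσ.eigenvalues_nonneg k).lt_or_eq with hk | hk
      · simp [hj, hk]
      · rw [inner_eigenvectorBasis_eq_zero_of_range_le hρ.1 hσ.1 hsupp hj.ne' hk.symm]
        simp
    rw [Finset.sum_congr rfl fun k _ => hterm k, ← Finset.mul_sum,
      sum_norm_inner_eigenvectorBasis_sq, mul_one]
    rfl
  · simp [← hj]

lemma Df_pos (hρ : ρ.IsHermitian) (hσ : σ.IsHermitian) {g : ℝ → ℝ} (hg : ∀ x > 0, 0 < g x)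
    (hone : 0 < Df (fun _ => 1) hρ hσ) : 0 < Df g hρ hσ := by
  rw [Df_eq_sum] at hone ⊢
  obtain ⟨j, -, hj⟩ := Finset.exists_ne_zero_of_sum_ne_zero hone.ne'
  obtain ⟨k, -, hk⟩ := Finset.exists_ne_zero_of_sum_ne_zero hj
  have hjk : 0 < hρ.eigenvalues j ∧ 0 < hσ.eigenvalues k := by
    by_contra h
    simp [h] at hk
  rw [if_pos hjk, mul_one] at hk
  have hk := lt_of_le_of_ne (mul_nonneg hjk.1.le (sq_nonneg _)) (Ne.symm hk)
  have hterm_nonneg : ∀ j k, 0 ≤ if 0 < hρ.eigenvalues j ∧ 0 < hσ.eigenvalues k then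
      hρ.eigenvalues j * g (hσ.eigenvalues k / hρ.eigenvalues j) *
        ‖(inner ℂ (hρ.eigenvectorBasis j) (hσ.eigenvectorBasis k) : ℂ)‖ ^ 2 else 0 := by
    intro j k
    split_ifs with h
    · exact mul_nonneg (mul_nonneg h.1.le (hg _ (div_pos h.2 h.1)).le) (sq_nonneg _)
    · rfl
  refine Finset.sum_pos' (fun j _ => Finset.sum_nonneg fun k _ => hterm_nonneg j k)
    ⟨j, Finset.mem_univ j, Finset.sum_pos' (fun k _ => hterm_nonneg j k) ⟨k, Finset.mem_univ k, ?_⟩⟩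
  rw [if_pos hjk, mul_assoc, mul_comm (g _), ← mul_assoc]
  exact mul_pos hk (hg _ (div_pos hjk.2 hjk.1))

lemma re_trace_matFun_mul_matFun (g g' : ℝ → ℝ) (hρ : ρ.IsHermitian) (hσ : σ.IsHermitian) :
    (matFun g hρ * matFun g' hσ).trace.re =
      ∑ j, ∑ k, if 0 < hρ.eigenvalues j ∧ 0 < hσ.eigenvalues k then
        g (hρ.eigenvalues j) * g' (hσ.eigenvalues k) *
          ‖(inner ℂ (hρ.eigenvectorBasis j) (hσ.eigenvectorBasis k) : ℂ)‖ ^ 2 else 0 := by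
  simp only [matFun, Finset.sum_mul_sum, trace_sum, smul_mul_smul_comm, trace_smul,
    trace_rankOne_mul_rankOne, Complex.re_sum]
  refine Finset.sum_congr rfl fun j _ => Finset.sum_congr rfl fun k _ => ?_
  by_cases hj : 0 < hρ.eigenvalues j <;> by_cases hk : 0 < hσ.eigenvalues k <;>
    simp [hj, hk, -Complex.ofReal_pow]

lemma Qalpha_eq_Df (α : ℝ) (hρ : ρ.IsHermitian) (hσ : σ.IsHermitian) :
    Qalpha α hρ hσ = Df (fun x => x ^ (1 - α)) hρ hσ := by
  rw [Qalpha, re_trace_matFun_mul_matFun, Df_eq_sum]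
  refine Finset.sum_congr rfl fun j _ => Finset.sum_congr rfl fun k _ => ?_
  split_ifs with h
  congr 1
  calc hρ.eigenvalues j ^ α * hσ.eigenvalues k ^ (1 - α)
      = hρ.eigenvalues j ^ (1 - (1 - α)) * hσ.eigenvalues k ^ (1 - α) := by ring_nf
    _ = _ := by rw [Real.rpow_sub h.1, Real.rpow_one, Real.div_rpow h.2.le h.1.le]; ring
  rfl

lemma Qalpha_pos (α : ℝ) (hρ : ρ.PosSemidef) (hσ : σ.PosSemidef)
    (hsupp : LinearMap.range ρ.mulVecLin ≤ LinearMap.range σ.mulVecLin) (htr : 0 < ρ.trace.re) :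
    0 < Qalpha α hρ.1 hσ.1 := by
  rw [Qalpha_eq_Df]
  exact Df_pos _ _ (fun x hx => Real.rpow_pos_of_pos hx _) (Df_one hρ hσ hsupp ▸ htr)

lemma sin_mul_pi_pos {α : ℝ} (h0 : 0 < α) (h1 : α < 1) : 0 < Real.sin (α * Real.pi) :=
  Real.sin_pos_of_pos_of_lt_pi (by positivity) (by nlinarith [Real.pi_pos])

lemma sin_mul_pi_neg {α : ℝ} (h1 : 1 < α) (h2 : α < 2) : Real.sin (α * Real.pi) < 0 := by
  rw [← Real.sin_sub_two_pi]
  exact Real.sin_neg_of_neg_of_neg_pi_lt (by nlinarith [Real.pi_pos]) (by nlinarith [Real.pi_pos])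

theorem lower_bound_petz_renyi_general (α : ℝ)
    (hα : α ∈ Set.Ioo (0 : ℝ) 1 ∪ Set.Ioo (1 : ℝ) 2)
    (ρ σ : Matrix (Fin d) (Fin d) ℂ) (hρ : IsState ρ) (hσ : IsState σ)
    (hsupp : LinearMap.range ρ.mulVecLin = LinearMap.range σ.mulVecLin)
    (m : ℕ) (t w : Fin m → ℝ)
    (hw : ∀ j, 0 < w j)
    (happrox :
      (α < 1 → ∀ x > (0 : ℝ), x ^ (1 - α) ≤
        1 + (Real.sin (α * Real.pi) / Real.pi) * ∑ j, w j * ft (t j) x) ∧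
      (1 < α → ∀ x > (0 : ℝ),
        1 + (Real.sin (α * Real.pi) / Real.pi) * ∑ j, w j * ft (t j) x ≤
          x ^ (1 - α)))
    (Dhat : Fin m → ℝ)
    (hest : ∀ j, Df (ft (t j)) hρ.1.1 hσ.1.1 ≤ Dhat j)
    (hQhat : 0 < 1 + (Real.sin (α * Real.pi) / Real.pi) * ∑ j, w j * Dhat j) :
    (1 / (α - 1)) *
        Real.logb 2 (1 + (Real.sin (α * Real.pi) / Real.pi) * ∑ j, w j * Dhat j) ≤
      (1 / (α - 1)) * Real.logb 2 (Qalpha α hρ.1.1 hσ.1.1) := by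
  set c := Real.sin (α * Real.pi) / Real.pi
  have hone : Df (fun _ => 1) hρ.1.1 hσ.1.1 = 1 := by
    rw [Df_one hρ.1 hσ.1 hsupp.le, hρ.2, Complex.one_re]
  have hquad : Df (fun x => 1 + c * ∑ j, w j * ft (t j) x) hρ.1.1 hσ.1.1 =
      1 + c * ∑ j, w j * Df (ft (t j)) hρ.1.1 hσ.1.1 := by
    rw [Df_one_add_mul_sum, hone]
  have hDhat : ∑ j, w j * Df (ft (t j)) hρ.1.1 hσ.1.1 ≤ ∑ j, w j * Dhat j :=
    Finset.sum_le_sum fun j _ => mul_le_mul_of_nonneg_left (hest j) (hw j).le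
  rcases hα with ⟨h0, h1⟩ | ⟨h1, h2⟩
  · have hc : 0 < c := div_pos (sin_mul_pi_pos h0 h1) Real.pi_pos
    have hQ : 0 < Qalpha α hρ.1.1 hσ.1.1 :=
      Qalpha_pos α hρ.1 hσ.1 hsupp.le (by simp [hρ.2])
    have hQle : Qalpha α hρ.1.1 hσ.1.1 ≤ 1 + c * ∑ j, w j * Dhat j :=
      calc Qalpha α hρ.1.1 hσ.1.1 = Df (fun x => x ^ (1 - α)) hρ.1.1 hσ.1.1 := Qalpha_eq_Df ..
        _ ≤ Df (fun x => 1 + c * ∑ j, w j * ft (t j) x) hρ.1.1 hσ.1.1 :=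
          Df_mono _ _ (happrox.1 h1)
        _ ≤ 1 + c * ∑ j, w j * Dhat j := by rw [hquad]; gcongr
    exact mul_le_mul_of_nonpos_left (Real.logb_le_logb_of_le one_lt_two hQ hQle)
      (by rw [one_div_nonpos]; linarith)
  · have hc : c < 0 := div_neg_of_neg_of_pos (sin_mul_pi_neg h1 h2) Real.pi_pos
    have hQle : 1 + c * ∑ j, w j * Dhat j ≤ Qalpha α hρ.1.1 hσ.1.1 :=
      calc 1 + c * ∑ j, w j * Dhat j
          ≤ Df (fun x => 1 + c * ∑ j, w j * ft (t j) x) hρ.1.1 hσ.1.1 := by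
            rw [hquad]; exact add_le_add_right (mul_le_mul_of_nonpos_left hDhat hc.le) 1
        _ ≤ Df (fun x => x ^ (1 - α)) hρ.1.1 hσ.1.1 := Df_mono _ _ (happrox.2 h1)
        _ = Qalpha α hρ.1.1 hσ.1.1 := (Qalpha_eq_Df ..).symm
    exact mul_le_mul_of_nonneg_left (Real.logb_le_logb_of_le one_lt_two hQhat hQle)
      (by rw [one_div_nonneg]; linarith)

/-- Rigorous lower bound on the Petz Rényi divergence: under one-sided quadrature
bounds on `x^{1−α}` and overestimates `D̂_j` of the `f_{t_j}`-divergences, the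
estimate `(1/(α−1)) log₂ Q̂` lower-bounds `D_α(ρ‖σ) = (1/(α−1)) log₂ Q_α(ρ‖σ)`. -/
theorem lower_bound_petz_renyi (α : ℝ)
    (hα : α ∈ Set.Ioo (0 : ℝ) 1 ∪ Set.Ioo (1 : ℝ) 2)
    (ρ σ : Matrix (Fin d) (Fin d) ℂ) (hρ : IsState ρ) (hσ : IsState σ)
    (hsupp : LinearMap.range ρ.mulVecLin = LinearMap.range σ.mulVecLin)
    (m : ℕ) (hm : 1 ≤ m) (t w : Fin m → ℝ)
    (ht : ∀ j, t j ∈ Set.Icc (0 : ℝ) 1) (hw : ∀ j, 0 < w j)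
    (happrox :
      (α < 1 → ∀ x > (0 : ℝ), x ^ (1 - α) ≤
        1 + (Real.sin (α * Real.pi) / Real.pi) * ∑ j, w j * ft (t j) x) ∧
      (1 < α → ∀ x > (0 : ℝ),
        1 + (Real.sin (α * Real.pi) / Real.pi) * ∑ j, w j * ft (t j) x ≤
          x ^ (1 - α)))
    (Dhat : Fin m → ℝ)
    (hest : ∀ j, Df (ft (t j)) hρ.1.1 hσ.1.1 ≤ Dhat j)
    (hQhat : 0 < 1 + (Real.sin (α * Real.pi) / Real.pi) * ∑ j, w j * Dhat j) :
    (1 / (α - 1)) *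
        Real.logb 2 (1 + (Real.sin (α * Real.pi) / Real.pi) * ∑ j, w j * Dhat j) ≤
      (1 / (α - 1)) * Real.logb 2 (Qalpha α hρ.1.1 hσ.1.1) :=
  lower_bound_petz_renyi_general α hα ρ σ hρ hσ hsupp m t w hw happrox Dhat hest hQhat

end QRE
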